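/- arXiv:2504.17469 — 2 statements merged into one kernel-verified Lean document; each statement's English description precedes it below -/
import Mathlib

section
/- Let x₁, x₂ ∈ ℝ with x₁ ≥ 0, x₂ ≥ 0 and x₁ + x₂ > 0, and let K be a positive natural number. Then there exists a natural number k with k ≤ K such that |x₁/(x₁ + x₂) − k/K| ≤ 1/(2·K), and moreover for this k and any concentrations c₁, c₂ ∈ ℝ, |(x₁·c₁ + x₂·c₂)/(x₁ + x₂) − (k·c₁ + (K − k)·c₂)/K| ≤ |c₁ − c₂|/(2·K). That is, for any blending point the discretisation grid {0, 1/K, …, 1} contains a ratio within 1/(2K) of the true mixing ratio, and the resulting discretised concentration differs from the true flow-weighted average concentration by at most |c₁ − c₂|/(2K), so the accuracy of the linearisation improves as K grows. -/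
theorem discretisation_error_bound (x₁ x₂ : ℝ) (hx₁ : 0 ≤ x₁) (hx₂ : 0 ≤ x₂)
    (hsum : 0 < x₁ + x₂) (K : ℕ) (hK : 0 < K) :
    ∃ k : ℕ, k ≤ K ∧
      |x₁ / (x₁ + x₂) - (k : ℝ) / K| ≤ 1 / (2 * K) ∧
      ∀ c₁ c₂ : ℝ,
        |(x₁ * c₁ + x₂ * c₂) / (x₁ + x₂) -
            ((k : ℝ) * c₁ + ((K : ℝ) - k) * c₂) / K| ≤ |c₁ - c₂| / (2 * K) := by
  set t : ℝ := x₁ / (x₁ + x₂) with ht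
  have ht0 : 0 ≤ t := div_nonneg hx₁ hsum.le
  have ht1 : t ≤ 1 := by
    rw [ht, div_le_one hsum]; linarith
  have hKpos : (0:ℝ) < K := by exact_mod_cast hK
  set z : ℤ := round (t * K) with hz
  have hlb : t * K - 1 / 2 < (z : ℝ) := sub_half_lt_round (t * K)
  have hub : (z : ℝ) ≤ t * K + 1 / 2 := round_le_add_half (t * K)
  have htK0 : 0 ≤ t * K := mul_nonneg ht0 hKpos.le
  have hz0 : 0 ≤ z := by
    have : (-1 : ℝ) < (z : ℝ) := by linarith
    have : (-1 : ℤ) < z := by exact_mod_cast this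
    omega
  have hzK : z ≤ (K : ℤ) := by
    have h1 : t * K ≤ K := by nlinarith
    have : (z : ℝ) < (K : ℝ) + 1 := by linarith
    have : z < (K : ℤ) + 1 := by exact_mod_cast this
    omega
  have hzc : ((z.toNat : ℝ)) = (z : ℝ) := by
    exact_mod_cast Int.toNat_of_nonneg hz0
  have hb : |t - (z : ℝ) / K| ≤ 1 / (2 * K) := by
    rw [show t - (z:ℝ)/K = (t*K - z)/K by field_simp, abs_div, abs_of_pos hKpos,
      div_le_div_iff₀ hKpos (by positivity)]
    have h12 : |t * K - (z : ℝ)| ≤ 1 / 2 := by simpa [hz] using abs_sub_round (t * K)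
    nlinarith [abs_nonneg (t * K - (z:ℝ))]
  refine ⟨z.toNat, by omega, by rw [hzc]; exact hb, ?_⟩
  intro c₁ c₂
  have key : (x₁ * c₁ + x₂ * c₂) / (x₁ + x₂) -
      ((z.toNat : ℝ) * c₁ + ((K : ℝ) - z.toNat) * c₂) / K
      = (t - (z : ℝ) / K) * (c₁ - c₂) := by
    rw [hzc, ht]
    field_simp
    ring
  rw [key, abs_mul]
  calc |t - (z : ℝ) / K| * |c₁ - c₂| ≤ 1 / (2 * K) * |c₁ - c₂| :=
        mul_le_mul_of_nonneg_right hb (abs_nonneg _)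
    _ = |c₁ - c₂| / (2 * K) := by ring
end

section
/- Let μ, C, SF, M ∈ ℝ with 0 < μ ≤ C, SF ≥ 0 and M ≥ SF. Then the set { (x, s) ∈ ℝ × ℝ | 0 ≤ x ≤ C ∧ 0 ≤ s ∧ ∃ Y ∈ ℝ, (Y = 0 ∨ Y = 1) ∧ x ≤ C·Y ∧ μ·Y ≤ x ∧ s ≤ SF + (1 − Y)·M ∧ SF − (1 − Y)·M ≤ s ∧ s ≤ SF·Y } is equal to { (x, s) | (x = 0 ∧ s = 0) ∨ (μ ≤ x ∧ x ≤ C ∧ s = SF) }. That is, projecting out the binary variable from the big-M MILP constraints for a fixed-outlet process with a single incoming edge yields exactly the conditional (Constraint-Programming) semantics: if the incoming edge carries positive flow then the outlet flow equals SF, and otherwise both flows vanish. -/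
theorem fixed_outlet_projection (μ C SF M : ℝ)
    (hμ : 0 < μ) (hμC : μ ≤ C) (hSF : 0 ≤ SF) (hM : SF ≤ M) :
    { p : ℝ × ℝ | 0 ≤ p.1 ∧ p.1 ≤ C ∧ 0 ≤ p.2 ∧
        ∃ Y : ℝ, (Y = 0 ∨ Y = 1) ∧ p.1 ≤ C * Y ∧ μ * Y ≤ p.1 ∧
          p.2 ≤ SF + (1 - Y) * M ∧ SF - (1 - Y) * M ≤ p.2 ∧ p.2 ≤ SF * Y } =
      { p : ℝ × ℝ | (p.1 = 0 ∧ p.2 = 0) ∨ (μ ≤ p.1 ∧ p.1 ≤ C ∧ p.2 = SF) } := by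
  ext p
  simp only [Set.mem_setOf_eq]
  constructor
  · rintro ⟨hx0, hxC, hs0, Y, (rfl | rfl), h1, h2, h3, h4, h5⟩
    · left
      constructor <;> nlinarith
    · right
      refine ⟨by linarith, hxC, by nlinarith⟩
  · rintro (⟨hx, hs⟩ | ⟨h1, h2, h3⟩)
    · exact ⟨le_of_eq hx.symm, by linarith, le_of_eq hs.symm,
        0, Or.inl rfl, by nlinarith, by nlinarith, by nlinarith, by nlinarith, by nlinarith⟩
    · exact ⟨by linarith, h2, by linarith, 1, Or.inr rfl,
        by nlinarith, by nlinarith, by nlinarith, by nlinarith, by nlinarith⟩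
end
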